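/- arXiv:2501.02453 — 4 statements merged into one kernel-verified Lean document; each statement's English description precedes it below -/
import Mathlib

section
/- Let W, L, H, d be positive real numbers with d < min(W, L, H). In ℝ³ with the Euclidean norm, define the open cuboid B = {(x,y,z) : |x| < W/2, |y| < L/2, |z| < H/2} and the expanded open cuboid B_exp = {(x,y,z) : |x| < W/2 + d/(2√2), |y| < L/2 + d/(2√2), |z| < H/2 + d/(2√2)}. If q₁, q₂ ∈ ℝ³ satisfy q₁ ∉ B_exp, q₂ ∉ B_exp, and ‖q₁ − q₂‖ ≤ d, then for every t ∈ [0,1] the point (1−t)·q₁ + t·q₂ does not lie in B. -/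
set_option maxHeartbeats 1000000

private lemma same_coord_aux (h δ d t x1 x2 : ℝ) (hδ : 0 < δ) (hd0 : 0 < d)
    (hd : d < 2 * h)
    (hx1 : h + δ ≤ |x1|) (hx2 : h + δ ≤ |x2|)
    (hp : |(1 - t) * x1 + t * x2| < h) (hsq : (x1 - x2) ^ 2 ≤ d ^ 2)
    (ht0 : 0 ≤ t) (ht1 : t ≤ 1) : False := by
  obtain ⟨hpl, hpr⟩ := abs_lt.mp hp
  rcases le_abs.mp hx1 with a1 | a1 <;> rcases le_abs.mp hx2 with a2 | a2
  · nlinarith [mul_nonneg (by linarith : (0:ℝ) ≤ 1 - t) (by linarith : 0 ≤ x1 - (h + δ)),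
      mul_nonneg ht0 (by linarith : 0 ≤ x2 - (h + δ))]
  · have hgt : d < x1 - x2 := by linarith
    nlinarith
  · have hgt : d < x2 - x1 := by linarith
    nlinarith
  · nlinarith [mul_nonneg (by linarith : (0:ℝ) ≤ 1 - t) (by linarith : 0 ≤ -x1 - (h + δ)),
      mul_nonneg ht0 (by linarith : 0 ≤ -x2 - (h + δ))]

private lemma diff_coord_aux (h1 h2 δ d t x1 x2 y1 y2 : ℝ) (hδ : 0 < δ)
    (hδsq : δ ^ 2 = d ^ 2 / 8)
    (hx : h1 + δ ≤ |x1|) (hy : h2 + δ ≤ |y2|)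
    (hpx : |(1 - t) * x1 + t * x2| < h1) (hpy : |(1 - t) * y1 + t * y2| < h2)
    (hsq : (x1 - x2) ^ 2 + (y1 - y2) ^ 2 ≤ d ^ 2)
    (ht0 : 0 ≤ t) (ht1 : t ≤ 1) : False := by
  set a := |x1 - x2| with ha
  set b := |y1 - y2| with hb
  have hta : δ < t * a := by
    have key : |x1 - ((1 - t) * x1 + t * x2)| = t * a := by
      rw [show x1 - ((1 - t) * x1 + t * x2) = t * (x1 - x2) by ring, abs_mul,
        abs_of_nonneg ht0]
    have h2' := abs_sub_abs_le_abs_sub x1 ((1 - t) * x1 + t * x2)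
    rw [key] at h2'
    linarith
  have htb : δ < (1 - t) * b := by
    have key : |y2 - ((1 - t) * y1 + t * y2)| = (1 - t) * b := by
      rw [show y2 - ((1 - t) * y1 + t * y2) = (1 - t) * (y2 - y1) by ring, abs_mul,
        abs_of_nonneg (by linarith : (0:ℝ) ≤ 1 - t), abs_sub_comm]
    have h2' := abs_sub_abs_le_abs_sub y2 ((1 - t) * y1 + t * y2)
    rw [key] at h2'
    linarith
  have hprod : δ * δ < (t * a) * ((1 - t) * b) :=
    mul_lt_mul'' hta htb hδ.le hδ.le
  have ha0 : 0 ≤ a := abs_nonneg _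
  have hb0 : 0 ≤ b := abs_nonneg _
  have hasq : a ^ 2 = (x1 - x2) ^ 2 := sq_abs _
  have hbsq : b ^ 2 = (y1 - y2) ^ 2 := sq_abs _
  linarith [sq_nonneg (a - b), mul_nonneg (sq_nonneg (2 * t - 1)) (mul_nonneg ha0 hb0)]

/-- Theorem 1 of the paper.
Let `W, L, H, d` be positive reals with `d < min (W, L, H)`. In `ℝ³` with the
Euclidean norm, let `B` be the open cuboid centered at the origin with
half-dimensions `W/2, L/2, H/2`, and `B_exp` the expanded open cuboid whose
half-dimensions are each enlarged by `d/(2√2)`. If `q₁, q₂ ∉ B_exp` and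
`‖q₁ − q₂‖ ≤ d`, then for every `t ∈ [0,1]` the point `(1−t)•q₁ + t•q₂`
does not lie in `B`. -/
theorem segment_avoids_cuboid
    (W L H d : ℝ) (hW : 0 < W) (hL : 0 < L) (hH : 0 < H) (hd : 0 < d)
    (hdm : d < min W (min L H))
    (B Bexp : Set (EuclideanSpace ℝ (Fin 3)))
    (hB : B = {p | |p 0| < W / 2 ∧ |p 1| < L / 2 ∧ |p 2| < H / 2})
    (hBexp : Bexp = {p | |p 0| < W / 2 + d / (2 * Real.sqrt 2) ∧
                         |p 1| < L / 2 + d / (2 * Real.sqrt 2) ∧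
                         |p 2| < H / 2 + d / (2 * Real.sqrt 2)})
    (q₁ q₂ : EuclideanSpace ℝ (Fin 3))
    (hq₁ : q₁ ∉ Bexp) (hq₂ : q₂ ∉ Bexp)
    (hdist : ‖q₁ - q₂‖ ≤ d) :
    ∀ t ∈ Set.Icc (0 : ℝ) 1, (1 - t) • q₁ + t • q₂ ∉ B := by
  intro t ht hp
  obtain ⟨ht0, ht1⟩ := ht
  rw [hB] at hp
  rw [hBexp] at hq₁ hq₂
  simp only [Set.mem_setOf_eq, not_and_or, not_lt] at hq₁ hq₂
  simp only [Set.mem_setOf_eq, PiLp.add_apply, PiLp.smul_apply, smul_eq_mul] at hp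
  obtain ⟨hp0, hp1, hp2⟩ := hp
  set δ := d / (2 * Real.sqrt 2) with hδdef
  have hs2 : (0:ℝ) < Real.sqrt 2 := Real.sqrt_pos.mpr (by norm_num)
  have hδpos : 0 < δ := by positivity
  have hδsq : δ ^ 2 = d ^ 2 / 8 := by
    have h2 : (Real.sqrt 2) ^ 2 = 2 := Real.sq_sqrt (by norm_num)
    rw [hδdef, div_pow, mul_pow, h2]
    ring
  have hW2 : d < 2 * (W / 2) := by have := min_le_left W (min L H); linarith
  have hL2 : d < 2 * (L / 2) := by
    have := le_trans (min_le_right W (min L H)) (min_le_left L H); linarith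
  have hH2 : d < 2 * (H / 2) := by
    have := le_trans (min_le_right W (min L H)) (min_le_right L H); linarith
  have hsum : (q₁ 0 - q₂ 0) ^ 2 + (q₁ 1 - q₂ 1) ^ 2 + (q₁ 2 - q₂ 2) ^ 2 ≤ d ^ 2 := by
    have h1 : ‖q₁ - q₂‖ ^ 2 ≤ d ^ 2 := by
      nlinarith [norm_nonneg (q₁ - q₂)]
    have h2 : ‖q₁ - q₂‖ ^ 2 = ∑ i, ‖(q₁ - q₂) i‖ ^ 2 := by
      rw [EuclideanSpace.norm_eq, Real.sq_sqrt (by positivity)]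
    rw [h2, Fin.sum_univ_three] at h1
    simp only [PiLp.sub_apply, Real.norm_eq_abs, sq_abs] at h1
    linarith
  have hsub0 : (q₁ 0 - q₂ 0) ^ 2 ≤ d ^ 2 := by
    linarith [sq_nonneg (q₁ 1 - q₂ 1), sq_nonneg (q₁ 2 - q₂ 2)]
  have hsub1 : (q₁ 1 - q₂ 1) ^ 2 ≤ d ^ 2 := by
    linarith [sq_nonneg (q₁ 0 - q₂ 0), sq_nonneg (q₁ 2 - q₂ 2)]
  have hsub2 : (q₁ 2 - q₂ 2) ^ 2 ≤ d ^ 2 := by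
    linarith [sq_nonneg (q₁ 0 - q₂ 0), sq_nonneg (q₁ 1 - q₂ 1)]
  rcases hq₁ with h1 | h1 | h1 <;> rcases hq₂ with h2 | h2 | h2
  · exact same_coord_aux (W / 2) δ d t _ _ hδpos hd hW2 h1 h2 hp0 hsub0 ht0 ht1
  · exact diff_coord_aux (W / 2) (L / 2) δ d t _ _ _ _ hδpos hδsq h1 h2 hp0 hp1
      (by linarith [sq_nonneg (q₁ 2 - q₂ 2)]) ht0 ht1
  · exact diff_coord_aux (W / 2) (H / 2) δ d t _ _ _ _ hδpos hδsq h1 h2 hp0 hp2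
      (by linarith [sq_nonneg (q₁ 1 - q₂ 1)]) ht0 ht1
  · exact diff_coord_aux (L / 2) (W / 2) δ d t _ _ _ _ hδpos hδsq h1 h2 hp1 hp0
      (by linarith [sq_nonneg (q₁ 2 - q₂ 2)]) ht0 ht1
  · exact same_coord_aux (L / 2) δ d t _ _ hδpos hd hL2 h1 h2 hp1 hsub1 ht0 ht1
  · exact diff_coord_aux (L / 2) (H / 2) δ d t _ _ _ _ hδpos hδsq h1 h2 hp1 hp2
      (by linarith [sq_nonneg (q₁ 0 - q₂ 0)]) ht0 ht1
  · exact diff_coord_aux (H / 2) (W / 2) δ d t _ _ _ _ hδpos hδsq h1 h2 hp2 hp0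
      (by linarith [sq_nonneg (q₁ 1 - q₂ 1)]) ht0 ht1
  · exact diff_coord_aux (H / 2) (L / 2) δ d t _ _ _ _ hδpos hδsq h1 h2 hp2 hp1
      (by linarith [sq_nonneg (q₁ 0 - q₂ 0)]) ht0 ht1
  · exact same_coord_aux (H / 2) δ d t _ _ hδpos hd hH2 h1 h2 hp2 hsub2 ht0 ht1
end

section
/- Let W, L, H, d be positive real numbers with d < min(W, L, H), let c ∈ ℝ³, and define the open cuboid B = {p ∈ ℝ³ : |p₁ − c₁| < W/2, |p₂ − c₂| < L/2, |p₃ − c₃| < H/2} and the expanded open cuboid B_exp = {p ∈ ℝ³ : |p₁ − c₁| < W/2 + d/(2√2), |p₂ − c₂| < L/2 + d/(2√2), |p₃ − c₃| < H/2 + d/(2√2)}. Let q₀, q₁, …, q_N ∈ ℝ³ be a finite sequence of waypoints such that q_n ∉ B_exp for every n and ‖q_n − q_{n−1}‖ ≤ d for every n ∈ {1,…,N}. Then the piecewise-linear trajectory through the waypoints never enters B: for every n ∈ {1,…,N} and every t ∈ [0,1], the point (1−t)·q_{n−1} + t·q_n does not lie in B. -/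
private lemma aux_gap (m e t u v w : ℝ) (hu : m + e ≤ |u - w|)
    (hp : |(1 - t) * u + t * v - w| < m) : e < |t| * |v - u| := by
  have h := abs_sub_abs_le_abs_sub (u - w) ((1 - t) * u + t * v - w)
  have h2 : (u - w) - ((1 - t) * u + t * v - w) = t * (u - v) := by ring
  rw [h2, abs_mul, abs_sub_comm u v] at h
  linarith

private lemma aux_same (d e m u v w t : ℝ) (he : 0 < e) (hm : d < 2 * m)
    (huv : |v - u| ≤ d) (hu : m + e ≤ |u - w|) (hv : m + e ≤ |v - w|)
    (ht0 : 0 ≤ t) (ht1 : t ≤ 1) (hp : |(1 - t) * u + t * v - w| < m) : False := by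
  rw [abs_le] at huv
  rw [abs_lt] at hp
  rcases le_abs.mp hu with h1 | h1 <;> rcases le_abs.mp hv with h2 | h2 <;>
    nlinarith [mul_nonneg ht0 (by linarith : (0:ℝ) ≤ 1 - t)]

private lemma aux_diff (d e t x y : ℝ) (he : 0 < e) (hd2 : d ^ 2 = 8 * e ^ 2)
    (hx0 : 0 ≤ x) (hy0 : 0 ≤ y) (ht0 : 0 ≤ t) (ht1 : t ≤ 1)
    (hx : e < t * x) (hy : e < (1 - t) * y)
    (hxy : x ^ 2 + y ^ 2 ≤ d ^ 2) : False := by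
  have h1 : e ^ 2 < (t * x) ^ 2 := by nlinarith
  have h2 : e ^ 2 < ((1 - t) * y) ^ 2 := by nlinarith
  have ht0' : 0 < t := by nlinarith
  have ht1' : t < 1 := by nlinarith
  have A : (1 - t) ^ 2 * e ^ 2 < (1 - t) ^ 2 * (t * x) ^ 2 :=
    mul_lt_mul_of_pos_left h1 (pow_pos (by linarith) 2)
  have B : t ^ 2 * e ^ 2 < t ^ 2 * ((1 - t) * y) ^ 2 :=
    mul_lt_mul_of_pos_left h2 (by positivity)
  have C : t ^ 2 * (1 - t) ^ 2 * (x ^ 2 + y ^ 2) ≤ t ^ 2 * (1 - t) ^ 2 * (8 * e ^ 2) := by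
    rw [← hd2]; exact mul_le_mul_of_nonneg_left hxy (by positivity)
  nlinarith [A, B, C, mul_nonneg (mul_nonneg (sq_nonneg e) (sq_nonneg (2 * t - 1)))
      (by nlinarith : (0:ℝ) ≤ 2 * t * (1 - t) + 1)]

set_option maxHeartbeats 1000000 in
/-- corollary of Theorem 1; constraint (31) of the paper.
If all waypoints `q 0, …, q N` avoid the expanded cuboid `B_exp` (centered at
`c`, each half-dimension enlarged by `d/(2√2)`) and consecutive waypoints are
at distance at most `d < min (W, L, H)`, then the piecewise-linear trajectory
through the waypoints never enters the open cuboid `B`. -/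
theorem piecewise_linear_trajectory_avoids_cuboid
    (W L H d : ℝ) (hW : 0 < W) (hL : 0 < L) (hH : 0 < H) (hd : 0 < d)
    (hdm : d < min W (min L H))
    (c : EuclideanSpace ℝ (Fin 3))
    (B Bexp : Set (EuclideanSpace ℝ (Fin 3)))
    (hB : B = {p | |p 0 - c 0| < W / 2 ∧ |p 1 - c 1| < L / 2 ∧ |p 2 - c 2| < H / 2})
    (hBexp : Bexp = {p | |p 0 - c 0| < W / 2 + d / (2 * Real.sqrt 2) ∧
                         |p 1 - c 1| < L / 2 + d / (2 * Real.sqrt 2) ∧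
                         |p 2 - c 2| < H / 2 + d / (2 * Real.sqrt 2)})
    (N : ℕ) (q : ℕ → EuclideanSpace ℝ (Fin 3))
    (hwp : ∀ n ≤ N, q n ∉ Bexp)
    (hstep : ∀ n, 1 ≤ n → n ≤ N → ‖q n - q (n - 1)‖ ≤ d) :
    ∀ n, 1 ≤ n → n ≤ N → ∀ t ∈ Set.Icc (0 : ℝ) 1,
      (1 - t) • q (n - 1) + t • q n ∉ B := by
  intro n hn hnN t ht hpB
  obtain ⟨ht0, ht1⟩ := ht
  have hs2 : Real.sqrt 2 ^ 2 = 2 := Real.sq_sqrt (by norm_num)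
  have hs2p : (0:ℝ) < Real.sqrt 2 := Real.sqrt_pos.mpr (by norm_num)
  set e := d / (2 * Real.sqrt 2) with he_def
  have he : 0 < e := by positivity
  have hd2 : d ^ 2 = 8 * e ^ 2 := by
    rw [he_def]; field_simp; nlinarith [hs2]
  have hdW : d < W := lt_of_lt_of_le hdm (min_le_left _ _)
  have hdL : d < L := lt_of_lt_of_le hdm (le_trans (min_le_right _ _) (min_le_left _ _))
  have hdH : d < H := lt_of_lt_of_le hdm (le_trans (min_le_right _ _) (min_le_right _ _))
  have ha := hwp (n - 1) (le_trans (Nat.sub_le _ _) hnN)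
  have hb := hwp n hnN
  have hnorm := hstep n hn hnN
  rw [hBexp, Set.mem_setOf_eq, not_and_or, not_and_or] at ha hb
  simp only [not_lt] at ha hb
  rw [hB, Set.mem_setOf_eq] at hpB
  obtain ⟨hp0, hp1, hp2⟩ := hpB
  set a := q (n - 1) with ha_def
  set b := q n with hb_def
  simp only [PiLp.add_apply, PiLp.smul_apply, smul_eq_mul] at hp0 hp1 hp2
  have hsum : (b 0 - a 0) ^ 2 + (b 1 - a 1) ^ 2 + (b 2 - a 2) ^ 2 ≤ d ^ 2 := by
    have h1 : ‖b - a‖ ^ 2 ≤ d ^ 2 := by nlinarith [norm_nonneg (b - a)]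
    rw [EuclideanSpace.norm_eq, Real.sq_sqrt (by positivity)] at h1
    simpa [Fin.sum_univ_three, Real.norm_eq_abs, sq_abs, PiLp.sub_apply] using h1
  have habs0 : |b 0 - a 0| ≤ d := by
    nlinarith [sq_nonneg (b 1 - a 1), sq_nonneg (b 2 - a 2),
      abs_nonneg (b 0 - a 0), sq_abs (b 0 - a 0)]
  have habs1 : |b 1 - a 1| ≤ d := by
    nlinarith [sq_nonneg (b 0 - a 0), sq_nonneg (b 2 - a 2),
      abs_nonneg (b 1 - a 1), sq_abs (b 1 - a 1)]
  have habs2 : |b 2 - a 2| ≤ d := by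
    nlinarith [sq_nonneg (b 0 - a 0), sq_nonneg (b 1 - a 1),
      abs_nonneg (b 2 - a 2), sq_abs (b 2 - a 2)]
  have gapA : ∀ (i : Fin 3) (m : ℝ), m + e ≤ |a i - c i| →
      |(1 - t) * a i + t * b i - c i| < m → e < t * |b i - a i| := by
    intro i m h1 h2
    have h3 := aux_gap m e t (a i) (b i) (c i) h1 h2
    rwa [abs_of_nonneg ht0] at h3
  have gapB : ∀ (i : Fin 3) (m : ℝ), m + e ≤ |b i - c i| →
      |(1 - t) * a i + t * b i - c i| < m → e < (1 - t) * |b i - a i| := by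
    intro i m h1 h2
    have h2' : |(1 - (1 - t)) * b i + (1 - t) * a i - c i| < m := by
      rw [show (1 - (1 - t)) * b i + (1 - t) * a i = (1 - t) * a i + t * b i by ring]
      exact h2
    have h3 := aux_gap m e (1 - t) (b i) (a i) (c i) h1 h2'
    rwa [abs_of_nonneg (by linarith), abs_sub_comm (a i) (b i)] at h3
  have hxy01 : (|b 0 - a 0|) ^ 2 + (|b 1 - a 1|) ^ 2 ≤ d ^ 2 := by
    rw [sq_abs, sq_abs]; nlinarith [sq_nonneg (b 2 - a 2)]
  have hxy02 : (|b 0 - a 0|) ^ 2 + (|b 2 - a 2|) ^ 2 ≤ d ^ 2 := by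
    rw [sq_abs, sq_abs]; nlinarith [sq_nonneg (b 1 - a 1)]
  have hxy12 : (|b 1 - a 1|) ^ 2 + (|b 2 - a 2|) ^ 2 ≤ d ^ 2 := by
    rw [sq_abs, sq_abs]; nlinarith [sq_nonneg (b 0 - a 0)]
  have hxy10 : (|b 1 - a 1|) ^ 2 + (|b 0 - a 0|) ^ 2 ≤ d ^ 2 := by linarith
  have hxy20 : (|b 2 - a 2|) ^ 2 + (|b 0 - a 0|) ^ 2 ≤ d ^ 2 := by linarith
  have hxy21 : (|b 2 - a 2|) ^ 2 + (|b 1 - a 1|) ^ 2 ≤ d ^ 2 := by linarith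
  rcases ha with ha | ha | ha <;> rcases hb with hb | hb | hb
  · exact aux_same d e (W / 2) (a 0) (b 0) (c 0) t he (by linarith) habs0 ha hb ht0 ht1 hp0
  · exact aux_diff d e t _ _ he hd2 (abs_nonneg _) (abs_nonneg _) ht0 ht1
      (gapA 0 (W / 2) ha hp0) (gapB 1 (L / 2) hb hp1) hxy01
  · exact aux_diff d e t _ _ he hd2 (abs_nonneg _) (abs_nonneg _) ht0 ht1
      (gapA 0 (W / 2) ha hp0) (gapB 2 (H / 2) hb hp2) hxy02
  · exact aux_diff d e t _ _ he hd2 (abs_nonneg _) (abs_nonneg _) ht0 ht1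
      (gapA 1 (L / 2) ha hp1) (gapB 0 (W / 2) hb hp0) hxy10
  · exact aux_same d e (L / 2) (a 1) (b 1) (c 1) t he (by linarith) habs1 ha hb ht0 ht1 hp1
  · exact aux_diff d e t _ _ he hd2 (abs_nonneg _) (abs_nonneg _) ht0 ht1
      (gapA 1 (L / 2) ha hp1) (gapB 2 (H / 2) hb hp2) hxy12
  · exact aux_diff d e t _ _ he hd2 (abs_nonneg _) (abs_nonneg _) ht0 ht1
      (gapA 2 (H / 2) ha hp2) (gapB 0 (W / 2) hb hp0) hxy20
  · exact aux_diff d e t _ _ he hd2 (abs_nonneg _) (abs_nonneg _) ht0 ht1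
      (gapA 2 (H / 2) ha hp2) (gapB 1 (L / 2) hb hp1) hxy21
  · exact aux_same d e (H / 2) (a 2) (b 2) (c 2) t he (by linarith) habs2 ha hb ht0 ht1 hp2
end

section
/- Let W, L, H be positive reals, let c ∈ ℝ³, let w, q ∈ ℝ³ with w ≠ q, let U be a positive integer, and set d = ‖q − w‖/U. Assume d < min(W, L, H). Define the open cuboid B = {p ∈ ℝ³ : |p₁ − c₁| < W/2, |p₂ − c₂| < L/2, |p₃ − c₃| < H/2} and the expanded open cuboid B_exp = {p ∈ ℝ³ : |p₁ − c₁| < W/2 + d/(2√2), |p₂ − c₂| < L/2 + d/(2√2), |p₃ − c₃| < H/2 + d/(2√2)}. Define the sample points qᵘ = w + (u/U)·(q − w) for u ∈ {0, 1, …, U}. If qᵘ ∉ B_exp for every u, then the entire segment from w to q avoids B: for every t ∈ [0,1], the point w + t·(q − w) does not lie in B. -/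
/-!
Take consecutive samples `a`, `b` with the segment point `p = a + s • (b - a)` between them,
so `‖b - a‖ = d`, and write `m = d / (2√2)` for the margin. Each sample leaves the expanded box
through some coordinate, while `p` lies in the box. If `a` and `b` leave through the same
coordinate `i`, they lie on the same side of the slab `|x i - c i| < r i`, which is wider than
`d`, and so does `p`. If they leave through different coordinates `i ≠ j`, then
`m < s |(b - a) i|` and `m < (1 - s) |(b - a) j|`, which forces
`(b - a) i ^ 2 + (b - a) j ^ 2 > 8 m ^ 2 = d ^ 2`, contradicting `‖b - a‖ = d`.
-/

open Set

theorem exists_nat_lt_mem_Icc_div {t : ℝ} (ht : t ∈ Icc (0 : ℝ) 1) {U : ℕ} (hU : 0 < U) :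
    ∃ u < U, t ∈ Icc ((u : ℝ) / U) ((u + 1) / U) := by
  have hU' : (0 : ℝ) < U := Nat.cast_pos.2 hU
  rcases ht.2.eq_or_lt with rfl | ht1
  · refine ⟨U - 1, Nat.sub_lt hU one_pos, ?_⟩
    rw [Nat.cast_pred hU, sub_add_cancel, div_self hU'.ne', mem_Icc, div_le_one hU']
    exact ⟨by linarith, le_rfl⟩
  · have htU : 0 ≤ t * U := mul_nonneg ht.1 hU'.le
    refine ⟨⌊t * U⌋₊, (Nat.floor_lt htU).2 (by nlinarith), ?_⟩
    rw [mem_Icc, div_le_iff₀ hU', le_div_iff₀ hU']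
    exact ⟨Nat.floor_le htU, (Nat.lt_floor_add_one _).le⟩

theorem le_abs_sub_of_mem_uIcc {α β x c r : ℝ} (hαβ : |α - β| < 2 * r) (hα : r ≤ |α - c|)
    (hβ : r ≤ |β - c|) (hx : x ∈ uIcc α β) : r ≤ |x - c| := by
  rw [le_abs'] at hα hβ ⊢
  rw [abs_lt] at hαβ
  rw [mem_uIcc] at hx
  rcases hα with hα | hα <;> rcases hβ with hβ | hβ <;> rcases hx with ⟨hx₁, hx₂⟩ | ⟨hx₁, hx₂⟩
  all_goals first | (left; linarith) | (right; linarith)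

theorem lt_abs_sub_of_abs_sub_lt {x y c r m : ℝ} (hx : |x - c| < r) (hy : r + m ≤ |y - c|) :
    m < |y - x| :=
  calc m < |y - c| - |x - c| := by linarith
    _ ≤ |y - x| := by simpa using abs_sub_abs_le_abs_sub (y - c) (x - c)

theorem eight_mul_sq_lt_sq_add_sq {m s x y : ℝ} (hm : 0 ≤ m) (hx : m < s * |x|)
    (hy : m < (1 - s) * |y|) : 8 * m ^ 2 < x ^ 2 + y ^ 2 := by
  have hx0 : 0 < |x| := pos_of_mul_pos_right (hm.trans_lt hx) (by nlinarith [abs_nonneg x])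
  have hy0 : 0 < |y| := pos_of_mul_pos_right (hm.trans_lt hy) (by nlinarith [abs_nonneg y])
  have hsum : m * (|x| + |y|) < |x| * |y| := by
    nlinarith [mul_lt_mul_of_pos_right hx hy0, mul_lt_mul_of_pos_right hy hx0]
  have h4 : 4 * m < |x| + |y| := by nlinarith [sq_nonneg (|x| - |y|)]
  nlinarith [sq_nonneg (|x| - |y|), sq_abs x, sq_abs y]

namespace EuclideanSpace

variable {ι : Type*} [Fintype ι]

def openBox (c : EuclideanSpace ℝ ι) (r : ι → ℝ) : Set (EuclideanSpace ℝ ι) :=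
  {p | ∀ k, |p k - c k| < r k}

theorem openBox_fin_three (c : EuclideanSpace ℝ (Fin 3)) (r : Fin 3 → ℝ) :
    openBox c r = {p | |p 0 - c 0| < r 0 ∧ |p 1 - c 1| < r 1 ∧ |p 2 - c 2| < r 2} := by
  ext p
  simp [openBox, Fin.forall_fin_succ]

theorem sq_add_sq_le_norm_sq (v : EuclideanSpace ℝ ι) {i j : ι} (hij : i ≠ j) :
    v i ^ 2 + v j ^ 2 ≤ ‖v‖ ^ 2 := by
  classical
  calc v i ^ 2 + v j ^ 2 = ∑ k ∈ {i, j}, v k ^ 2 := by rw [Finset.sum_pair hij]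
    _ ≤ ∑ k, v k ^ 2 :=
      Finset.sum_le_sum_of_subset_of_nonneg (Finset.subset_univ _) fun k _ _ => sq_nonneg _
    _ = ‖v‖ ^ 2 := (real_norm_sq_eq v).symm

theorem notMem_openBox_of_mem_segment {c a b p : EuclideanSpace ℝ ι} {r : ι → ℝ} {d : ℝ}
    (hab : dist a b ≤ d) (hd : ∀ k, d < 2 * r k)
    (ha : a ∉ openBox c (fun k => r k + d / (2 * √2)))
    (hb : b ∉ openBox c (fun k => r k + d / (2 * √2))) (hp : p ∈ segment ℝ a b) :
    p ∉ openBox c r := by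
  intro hpB
  set m := d / (2 * √2)
  have hm : 0 ≤ m := div_nonneg (dist_nonneg.trans hab) (by positivity)
  simp only [openBox, mem_ofPred_eq, not_forall, not_lt] at ha hb
  obtain ⟨i, hai⟩ := ha
  obtain ⟨j, hbj⟩ := hb
  obtain ⟨s, ⟨hs0, hs1⟩, rfl⟩ := segment_eq_image' ℝ a b ▸ hp
  simp only [openBox, mem_ofPred_eq, PiLp.add_apply, PiLp.smul_apply, PiLp.sub_apply,
    smul_eq_mul] at hpB
  by_cases hij : i = j
  · subst hij
    have hpi : a i + s * (b i - a i) ∈ uIcc (a i) (b i) :=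
      (convex_uIcc _ _).add_smul_sub_mem left_mem_uIcc right_mem_uIcc ⟨hs0, hs1⟩
    refine (hpB i).not_ge (le_abs_sub_of_mem_uIcc ?_ (by linarith) (by linarith) hpi)
    calc |a i - b i| = ‖(a - b) i‖ := rfl
      _ ≤ dist a b := PiLp.norm_apply_le _ _
      _ < 2 * r i := hab.trans_lt (hd i)
  · have hi : m < s * |(b - a) i| := by
      have := lt_abs_sub_of_abs_sub_lt (hpB i) hai
      rwa [show a i - (a i + s * (b i - a i)) = -(s * (b i - a i)) by ring, abs_neg, abs_mul,
        abs_of_nonneg hs0] at this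
    have hj : m < (1 - s) * |(b - a) j| := by
      have := lt_abs_sub_of_abs_sub_lt (hpB j) hbj
      rwa [show b j - (a j + s * (b j - a j)) = (1 - s) * (b j - a j) by ring, abs_mul,
        abs_of_nonneg (sub_nonneg.2 hs1)] at this
    have hm8 : 8 * m ^ 2 = d ^ 2 := by
      rw [div_pow, mul_pow, Real.sq_sqrt zero_le_two]; ring
    have hba : ‖b - a‖ ^ 2 ≤ d ^ 2 := by
      rw [← dist_eq_norm, dist_comm]
      exact pow_le_pow_left₀ dist_nonneg hab 2
    linarith [eight_mul_sq_lt_sq_add_sq hm hi hj, (b - a).sq_add_sq_le_norm_sq hij]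

end EuclideanSpace

theorem sampled_segment_avoids_cuboid_general
    (W L H : ℝ)
    (c w q : EuclideanSpace ℝ (Fin 3))
    (U : ℕ) (hU : 0 < U)
    (d : ℝ) (hd : d = ‖q - w‖ / U)
    (hdm : d < min W (min L H))
    (B Bexp : Set (EuclideanSpace ℝ (Fin 3)))
    (hB : B = {p | |p 0 - c 0| < W / 2 ∧ |p 1 - c 1| < L / 2 ∧ |p 2 - c 2| < H / 2})
    (hBexp : Bexp = {p | |p 0 - c 0| < W / 2 + d / (2 * Real.sqrt 2) ∧
                         |p 1 - c 1| < L / 2 + d / (2 * Real.sqrt 2) ∧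
                         |p 2 - c 2| < H / 2 + d / (2 * Real.sqrt 2)})
    (hsample : ∀ u ≤ U, w + ((u : ℝ) / U) • (q - w) ∉ Bexp) :
    ∀ t ∈ Set.Icc (0 : ℝ) 1, w + t • (q - w) ∉ B := by
  intro t ht
  obtain ⟨u, huU, htu⟩ := exists_nat_lt_mem_Icc_div ht hU
  have hU' : (0 : ℝ) < U := Nat.cast_pos.2 hU
  set r : Fin 3 → ℝ := ![W / 2, L / 2, H / 2]
  have hBr : B = c.openBox r := by rw [hB, EuclideanSpace.openBox_fin_three]; rfl
  have hBexpr : Bexp = c.openBox (fun k => r k + d / (2 * √2)) := by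
    rw [hBexp, EuclideanSpace.openBox_fin_three]; rfl
  have hline (x : ℝ) : w + x • (q - w) = AffineMap.lineMap w q x := by
    rw [AffineMap.lineMap_apply_module', add_comm]
  simp only [hline, hBexpr] at hsample
  have hb := hsample (u + 1) huU
  push_cast at hb
  rw [hBr, hline]
  refine EuclideanSpace.notMem_openBox_of_mem_segment ?_ ?_ (hsample u huU.le) hb ?_
  · rw [dist_lineMap_lineMap, Real.dist_eq, ← sub_div, sub_add_cancel_left, abs_div, abs_neg,
      abs_one, abs_of_pos hU', dist_eq_norm', hd, one_div_mul_eq_div]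
  · obtain ⟨hdW, hdL, hdH⟩ : d < W ∧ d < L ∧ d < H := by simpa only [lt_min_iff] using hdm
    intro k
    fin_cases k <;> dsimp [r] <;> linarith
  · rw [← image_segment, segment_eq_uIcc]
    exact mem_image_of_mem _ (Icc_subset_uIcc htu)

/-- corollary of Theorem 1; constraint (27) of the paper.
The segment between the ground node at `w` and the UAV at `q` is discretized
into `U` equal subsegments with sample points `qᵘ = w + (u/U)•(q − w)`, which
are at distance `d = ‖q − w‖/U` apart. If all sample points avoid the expanded
cuboid `B_exp` (centered at `c`, each half-dimension enlarged by `d/(2√2)`),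
and `d < min (W, L, H)`, then the whole segment from `w` to `q` avoids the
open cuboid `B`. -/
theorem sampled_segment_avoids_cuboid
    (W L H : ℝ) (hW : 0 < W) (hL : 0 < L) (hH : 0 < H)
    (c w q : EuclideanSpace ℝ (Fin 3)) (hwq : w ≠ q)
    (U : ℕ) (hU : 0 < U)
    (d : ℝ) (hd : d = ‖q - w‖ / U)
    (hdm : d < min W (min L H))
    (B Bexp : Set (EuclideanSpace ℝ (Fin 3)))
    (hB : B = {p | |p 0 - c 0| < W / 2 ∧ |p 1 - c 1| < L / 2 ∧ |p 2 - c 2| < H / 2})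
    (hBexp : Bexp = {p | |p 0 - c 0| < W / 2 + d / (2 * Real.sqrt 2) ∧
                         |p 1 - c 1| < L / 2 + d / (2 * Real.sqrt 2) ∧
                         |p 2 - c 2| < H / 2 + d / (2 * Real.sqrt 2)})
    (hsample : ∀ u ≤ U, w + ((u : ℝ) / U) • (q - w) ∉ Bexp) :
    ∀ t ∈ Set.Icc (0 : ℝ) 1, w + t • (q - w) ∉ B :=
  sampled_segment_avoids_cuboid_general W L H c w q U hU d hd hdm B Bexp hB hBexp hsample
end

section
/- Let L, H, d be positive real numbers. Let q₁ = (x₁, y₁, H/2 + d/(2√2)) and q₂ = (x₂, L/2 + d/(2√2), z₂) be points in ℝ³ (so q₁ lies in the plane z = H/2 + d/(2√2) and q₂ lies in the plane y = L/2 + d/(2√2)). Suppose there exists t ∈ (0,1) such that the point v = q₁ + t·(q₂ − q₁) satisfies |v₂| < L/2 and |v₃| < H/2. Then ‖q₁ − q₂‖ > d, where ‖·‖ is the Euclidean norm on ℝ³. -/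
lemma aux_t_ineq (t c : ℝ) (ht0 : 0 < t) (ht1 : t < 1) :
    8 * c ^ 2 * ((1 - t) ^ 2 * t ^ 2) ≤ c ^ 2 * t ^ 2 + (1 - t) ^ 2 * c ^ 2 := by
  nlinarith [mul_nonneg (sq_nonneg c)
    (mul_nonneg (by nlinarith [sq_nonneg (1 - 2 * t)] : (0:ℝ) ≤ 1 - 4 * (t * (1 - t)))
      (by nlinarith : (0:ℝ) ≤ 1 + 2 * (t * (1 - t))))]

set_option maxHeartbeats 1000000 in
/-- key lemma of subcase ii-3 in the Appendix proof of
Theorem 1. Let `q₁` lie on the plane `z = H/2 + d/(2√2)` and `q₂` on the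
plane `y = L/2 + d/(2√2)` (adjacent faces of the expanded cuboid). If some
interior point `v = q₁ + t•(q₂ − q₁)`, `t ∈ (0,1)`, of the segment satisfies
`|v₂| < L/2` and `|v₃| < H/2` (it enters the original cuboid in the `y` and
`z` coordinates), then `‖q₁ − q₂‖ > d`. -/
theorem adjacent_faces_segment_length
    (L H d : ℝ) (hL : 0 < L) (hH : 0 < H) (hd : 0 < d)
    (q₁ q₂ : EuclideanSpace ℝ (Fin 3))
    (hq₁ : q₁ 2 = H / 2 + d / (2 * Real.sqrt 2))
    (hq₂ : q₂ 1 = L / 2 + d / (2 * Real.sqrt 2))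
    (t : ℝ) (ht0 : 0 < t) (ht1 : t < 1)
    (hv2 : |(q₁ + t • (q₂ - q₁)) 1| < L / 2)
    (hv3 : |(q₁ + t • (q₂ - q₁)) 2| < H / 2) :
    ‖q₁ - q₂‖ > d := by
  have hs2 : (0:ℝ) < Real.sqrt 2 := Real.sqrt_pos.mpr (by norm_num)
  set c : ℝ := d / (2 * Real.sqrt 2) with hc
  have hcpos : 0 < c := by positivity
  have hc2 : c ^ 2 = d ^ 2 / 8 := by
    rw [hc, div_pow, mul_pow, Real.sq_sqrt (by norm_num : (0:ℝ) ≤ 2)]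
    ring
  have hv2' : (q₁ + t • (q₂ - q₁)) 1 = q₁ 1 + t * (q₂ 1 - q₁ 1) := by
    simp [PiLp.add_apply, PiLp.smul_apply, PiLp.sub_apply, smul_eq_mul]
  have hv3' : (q₁ + t • (q₂ - q₁)) 2 = q₁ 2 + t * (q₂ 2 - q₁ 2) := by
    simp [PiLp.add_apply, PiLp.smul_apply, PiLp.sub_apply, smul_eq_mul]
  set Y : ℝ := |q₁ 1 - q₂ 1| with hY
  set Z : ℝ := |q₁ 2 - q₂ 2| with hZ
  -- from hv2: (1-t) * Y > c
  have h1 : (1 - t) * Y > c := by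
    have hlt : q₁ 1 + t * (q₂ 1 - q₁ 1) < L / 2 := by
      have := (abs_lt.mp (hv2' ▸ hv2)).2
      linarith
    have h : (1 - t) * (q₂ 1 - q₁ 1) > c := by
      rw [hq₂] at hlt ⊢
      nlinarith
    calc c < (1 - t) * (q₂ 1 - q₁ 1) := h
      _ ≤ (1 - t) * Y := by
        apply mul_le_mul_of_nonneg_left _ (by linarith)
        rw [hY, abs_sub_comm]
        exact le_abs_self _
  have h2 : t * Z > c := by
    have hlt : q₁ 2 + t * (q₂ 2 - q₁ 2) < H / 2 := by
      have := (abs_lt.mp (hv3' ▸ hv3)).2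
      linarith
    have h : t * (q₁ 2 - q₂ 2) > c := by
      rw [hq₁] at hlt
      nlinarith
    calc c < t * (q₁ 2 - q₂ 2) := h
      _ ≤ t * Z := mul_le_mul_of_nonneg_left (le_abs_self _) (le_of_lt ht0)
  have hYn : 0 ≤ Y := abs_nonneg _
  have hZn : 0 ≤ Z := abs_nonneg _
  -- Y^2 + Z^2 > 8 c^2
  have hkey : Y ^ 2 + Z ^ 2 > 8 * c ^ 2 := by
    have hu : 0 < 1 - t := by linarith
    have hY2 : Y ^ 2 > c ^ 2 / (1 - t) ^ 2 := by
      rw [gt_iff_lt, div_lt_iff₀ (by positivity)]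
      nlinarith
    have hZ2 : Z ^ 2 > c ^ 2 / t ^ 2 := by
      rw [gt_iff_lt, div_lt_iff₀ (by positivity)]
      nlinarith
    have h8 : c ^ 2 / (1 - t) ^ 2 + c ^ 2 / t ^ 2 ≥ 8 * c ^ 2 := by
      rw [div_add_div _ _ (by positivity) (by positivity), ge_iff_le,
        le_div_iff₀ (by positivity)]
      exact aux_t_ineq t c ht0 ht1
    linarith
  have hnorm : ‖q₁ - q₂‖ ^ 2 ≥ Y ^ 2 + Z ^ 2 := by
    have hne : ‖q₁ - q₂‖ = Real.sqrt (∑ i : Fin 3, ((q₁ - q₂) i) ^ 2) := by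
      rw [EuclideanSpace.norm_eq]
      congr 1
      exact Finset.sum_congr rfl (fun i _ => by rw [Real.norm_eq_abs, sq_abs])
    rw [hne, Real.sq_sqrt (Finset.sum_nonneg fun i _ => sq_nonneg _),
      Fin.sum_univ_three]
    have e1 : (q₁ - q₂) 1 = q₁ 1 - q₂ 1 := by simp [PiLp.sub_apply]
    have e2 : (q₁ - q₂) 2 = q₁ 2 - q₂ 2 := by simp [PiLp.sub_apply]
    rw [e1, e2, hY, hZ, sq_abs, sq_abs]
    have h0 := sq_nonneg ((q₁ - q₂) 0)
    linarith
  have hd2 : d ^ 2 < ‖q₁ - q₂‖ ^ 2 := by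
    have : 8 * c ^ 2 = d ^ 2 := by rw [hc2]; ring
    linarith
  exact lt_of_pow_lt_pow_left₀ 2 (norm_nonneg _) hd2
end
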